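/- Let P be analytic on D with P(0)=1 and Re(e^{iγ}P(z)) > β cos γ in D, P'(0) = 2(1-β)e^{-iγ}λ cos γ with |λ| < 1 (γ real, |γ| < π/2, 0 ≤ β < 1). Then there exists a ∈ closure(D) such that P''(0) = 4(1-β)[(1-|λ|²)a + λ²]e^{-iγ} cos γ. -/

import Mathlib

open Complex Metric Set Topology
open scoped ComplexConjugate

/-!
Rotating by `e^{iγ}` and rescaling by `(1 - β) cos γ` turns `P` into a function `q` with
`q 0 = 1`, positive real part and `q'(0) = 2λ`; the Cayley transform `w = (q - 1) / (q + 1)` is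
then a self-map of the unit disc fixing `0`. Its slope `φ = w / z` maps the disc into the closed
disc with `φ 0 = w'(0) = λ` and `φ'(0) = w''(0) / 2`, so the Schwarz–Pick inequality
`|φ'(0)| ≤ 1 - |φ 0|²` at the origin (the Schwarz lemma composed with the disc automorphism
moving `λ` to `0`) gives `|w''(0) / 2| ≤ 1 - |λ|²`. Expressing `w''(0)` through `P''(0)`, this
is `|e^{iγ} P''(0) / (4 (1 - β) cos γ) - λ²| ≤ 1 - |λ|²`.
-/

noncomputable def blaschkeFactor (a z : ℂ) : ℂ := (z - a) / (1 - conj a * z)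

lemma normSq_one_sub_conj_mul_sub_normSq_sub (a z : ℂ) :
    normSq (1 - conj a * z) - normSq (z - a) = (1 - normSq a) * (1 - normSq z) := by
  simp only [normSq_apply, sub_re, sub_im, mul_re, mul_im, one_re, one_im, conj_re, conj_im]
  ring

lemma norm_sub_le_norm_one_sub_conj_mul {a z : ℂ} (ha : ‖a‖ ≤ 1) (hz : ‖z‖ ≤ 1) :
    ‖z - a‖ ≤ ‖1 - conj a * z‖ := by
  have key := normSq_one_sub_conj_mul_sub_normSq_sub a z
  rw [normSq_eq_norm_sq, normSq_eq_norm_sq, normSq_eq_norm_sq, normSq_eq_norm_sq] at key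
  have : ‖z - a‖ ^ 2 ≤ ‖1 - conj a * z‖ ^ 2 := by
    nlinarith [mul_nonneg (sub_nonneg.2 (pow_le_one₀ (n := 2) (norm_nonneg a) ha))
      (sub_nonneg.2 (pow_le_one₀ (n := 2) (norm_nonneg z) hz))]
  exact (pow_le_pow_iff_left₀ (norm_nonneg _) (norm_nonneg _) two_ne_zero).1 this

lemma norm_blaschkeFactor_le_one {a z : ℂ} (ha : ‖a‖ ≤ 1) (hz : ‖z‖ ≤ 1) :
    ‖blaschkeFactor a z‖ ≤ 1 := by
  rw [blaschkeFactor, norm_div]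
  exact div_le_one_of_le₀ (norm_sub_le_norm_one_sub_conj_mul ha hz) (norm_nonneg _)

lemma one_sub_conj_mul_ne_zero {a z : ℂ} (ha : ‖a‖ < 1) (hz : ‖z‖ ≤ 1) :
    1 - conj a * z ≠ 0 := by
  refine sub_ne_zero.2 (fun h => ?_)
  have : ‖conj a * z‖ < 1 := by
    rw [norm_mul, norm_conj]
    exact mul_lt_one_of_nonneg_of_lt_one_left (norm_nonneg a) ha hz
  simp [← h] at this

lemma hasDerivAt_blaschkeFactor {a z : ℂ} (h : 1 - conj a * z ≠ 0) :
    HasDerivAt (blaschkeFactor a) ((1 - normSq a) / (1 - conj a * z) ^ 2) z := by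
  refine (((hasDerivAt_id' z).sub_const a).div
    (((hasDerivAt_id' z).const_mul (conj a)).const_sub 1) h).congr_deriv ?_
  rw [normSq_eq_conj_mul_self]
  ring

lemma blaschkeFactor_self (a : ℂ) : blaschkeFactor a a = 0 := by
  simp [blaschkeFactor]

lemma hasDerivAt_blaschkeFactor_self {a : ℂ} (ha : ‖a‖ < 1) :
    HasDerivAt (blaschkeFactor a) ((1 - ‖a‖ ^ 2 : ℝ) : ℂ)⁻¹ a := by
  have hconj : 1 - conj a * a = ((1 - ‖a‖ ^ 2 : ℝ) : ℂ) := by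
    rw [mul_comm, mul_conj, normSq_eq_norm_sq]; push_cast; ring
  have hpos : (0 : ℝ) < 1 - ‖a‖ ^ 2 := by nlinarith [norm_nonneg a]
  have hne : ((1 - ‖a‖ ^ 2 : ℝ) : ℂ) ≠ 0 := by exact_mod_cast hpos.ne'
  refine (hasDerivAt_blaschkeFactor (hconj ▸ hne)).congr_deriv ?_
  rw [hconj, ← hconj, mul_comm, mul_conj]
  field_simp

theorem norm_deriv_le_one_sub_norm_sq_of_mapsTo_ball {g : ℂ → ℂ}
    (hd : DifferentiableOn ℂ g (ball 0 1)) (h_maps : MapsTo g (ball 0 1) (closedBall 0 1))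
    (h₀ : ‖g 0‖ < 1) : ‖deriv g 0‖ ≤ 1 - ‖g 0‖ ^ 2 := by
  have hden : ∀ z ∈ ball (0 : ℂ) 1, 1 - conj (g 0) * g z ≠ 0 := fun z hz =>
    one_sub_conj_mul_ne_zero h₀ (mem_closedBall_zero_iff.1 (h_maps hz))
  have hψd : DifferentiableOn ℂ (blaschkeFactor (g 0) ∘ g) (ball 0 1) := fun z hz =>
    (hasDerivAt_blaschkeFactor (hden z hz)).differentiableAt.comp_differentiableWithinAt z
      (hd z hz)
  have hψ_maps : MapsTo (blaschkeFactor (g 0) ∘ g) (ball 0 1)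
      (closedBall ((blaschkeFactor (g 0) ∘ g) 0) 1) := fun z hz => by
    rw [Function.comp_apply, blaschkeFactor_self, mem_closedBall_zero_iff]
    exact norm_blaschkeFactor_le_one h₀.le (mem_closedBall_zero_iff.1 (h_maps hz))
  have hpos : 0 < 1 - ‖g 0‖ ^ 2 := by nlinarith [norm_nonneg (g 0)]
  have := norm_deriv_le_one_of_mapsTo_ball hψd hψ_maps one_pos
  rwa [((hasDerivAt_blaschkeFactor_self h₀).comp 0
      (hd.differentiableAt (ball_mem_nhds 0 one_pos)).hasDerivAt).deriv, norm_mul, norm_inv,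
    norm_real, Real.norm_of_nonneg hpos.le, inv_mul_le_iff₀ hpos, mul_one] at this

theorem AnalyticAt.deriv_dslope_self {𝕜 : Type*} [NontriviallyNormedField 𝕜]
    [CompleteSpace 𝕜] [CharZero 𝕜] {f : 𝕜 → 𝕜} {x : 𝕜} (hf : AnalyticAt 𝕜 f x) :
    deriv (dslope f x) x = iteratedDeriv 2 f x / 2 := by
  rw [hf.hasFPowerSeriesAt.has_fpower_series_dslope_fslope.deriv]
  change FormalMultilinearSeries.coeff _ 1 = _
  rw [FormalMultilinearSeries.coeff_fslope, FormalMultilinearSeries.coeff_ofScalars]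
  norm_num [Nat.factorial]

theorem norm_iteratedDeriv_two_div_two_le_of_mapsTo_ball {f : ℂ → ℂ}
    (hd : DifferentiableOn ℂ f (ball 0 1)) (h_maps : MapsTo f (ball 0 1) (closedBall 0 1))
    (h₀ : f 0 = 0) (h' : ‖deriv f 0‖ < 1) :
    ‖iteratedDeriv 2 f 0 / 2‖ ≤ 1 - ‖deriv f 0‖ ^ 2 := by
  have hball : ball (0 : ℂ) 1 ∈ 𝓝 0 := ball_mem_nhds 0 one_pos
  have hφd : DifferentiableOn ℂ (dslope f 0) (ball 0 1) := (differentiableOn_dslope hball).2 hd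
  have hφ_maps : MapsTo (dslope f 0) (ball 0 1) (closedBall 0 1) := fun z hz => by
    simpa using norm_dslope_le_div_of_mapsTo_ball hd (by rwa [h₀]) hz
  have := norm_deriv_le_one_sub_norm_sq_of_mapsTo_ball hφd hφ_maps (by rwa [dslope_same])
  rwa [(hd.analyticAt hball).deriv_dslope_self, dslope_same] at this

lemma norm_sub_one_div_add_one_lt_one {s : ℂ} (hs : 0 < s.re) : ‖(s - 1) / (s + 1)‖ < 1 := by
  have hlt : ‖s - 1‖ < ‖s + 1‖ := by
    rw [norm_def, norm_def]
    refine Real.sqrt_lt_sqrt (normSq_nonneg _) ?_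
    simp only [normSq_apply, sub_re, sub_im, add_re, add_im, one_re, one_im]
    nlinarith
  rw [norm_div]
  exact (div_lt_one ((norm_nonneg _).trans_lt hlt)).2 hlt

section Cayley

variable {𝕜 : Type*} [NontriviallyNormedField 𝕜] {q : 𝕜 → 𝕜} {x : 𝕜}

lemma hasDerivAt_sub_one_div_add_one (hq : DifferentiableAt 𝕜 q x) (hx : q x + 1 ≠ 0) :
    HasDerivAt (fun z => (q z - 1) / (q z + 1)) (2 * deriv q x / (q x + 1) ^ 2) x :=
  ((hq.hasDerivAt.sub_const 1).div (hq.hasDerivAt.add_const 1) hx).congr_deriv (by ring)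

lemma iteratedDeriv_two_sub_one_div_add_one [CompleteSpace 𝕜] (hq : AnalyticAt 𝕜 q x)
    (hx : q x + 1 ≠ 0) :
    iteratedDeriv 2 (fun z => (q z - 1) / (q z + 1)) x =
      2 * (iteratedDeriv 2 q x * (q x + 1) - 2 * deriv q x ^ 2) / (q x + 1) ^ 3 := by
  have hderiv : deriv (fun z => (q z - 1) / (q z + 1)) =ᶠ[𝓝 x]
      fun z => 2 * deriv q z / (q z + 1) ^ 2 := by
    filter_upwards [hq.eventually_analyticAt,
      hq.continuousAt.add_const 1 |>.eventually_ne hx] with z hz hz'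
    exact (hasDerivAt_sub_one_div_add_one hz.differentiableAt hz').deriv
  have hq' := hq.differentiableAt.hasDerivAt
  have hderiv' : HasDerivAt (fun z => 2 * deriv q z / (q z + 1) ^ 2)
      ((2 * deriv (deriv q) x * (q x + 1) ^ 2 - 2 * deriv q x * (2 * (q x + 1) * deriv q x)) /
        ((q x + 1) ^ 2) ^ 2) x :=
    (hq.deriv.differentiableAt.hasDerivAt.const_mul 2).div
      (by simpa using (hq'.add_const 1).fun_pow 2) (pow_ne_zero 2 hx)
  simp only [iteratedDeriv_succ, iteratedDeriv_zero]
  rw [hderiv.deriv_eq, hderiv'.deriv]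
  field_simp

end Cayley

theorem norm_iteratedDeriv_two_div_four_sub_sq_le {q : ℂ → ℂ}
    (hd : DifferentiableOn ℂ q (ball 0 1)) (h₀ : q 0 = 1)
    (hre : ∀ z ∈ ball (0 : ℂ) 1, 0 < (q z).re) (h' : ‖deriv q 0‖ < 2) :
    ‖iteratedDeriv 2 q 0 / 4 - (deriv q 0 / 2) ^ 2‖ ≤ 1 - ‖deriv q 0 / 2‖ ^ 2 := by
  have hball : ball (0 : ℂ) 1 ∈ 𝓝 0 := ball_mem_nhds 0 one_pos
  have hne : ∀ z ∈ ball (0 : ℂ) 1, q z + 1 ≠ 0 := fun z hz h => by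
    have := hre z hz
    rw [eq_neg_of_add_eq_zero_left h] at this
    norm_num at this
  have hne₀ := hne 0 (mem_ball_self one_pos)
  have hwd : DifferentiableOn ℂ (fun z => (q z - 1) / (q z + 1)) (ball 0 1) := fun z hz =>
    (hasDerivAt_sub_one_div_add_one (hd.differentiableAt (isOpen_ball.mem_nhds hz))
      (hne z hz)).differentiableAt.differentiableWithinAt
  have hw_maps : MapsTo (fun z => (q z - 1) / (q z + 1)) (ball 0 1) (closedBall 0 1) :=
    fun z hz => mem_closedBall_zero_iff.2 (norm_sub_one_div_add_one_lt_one (hre z hz)).le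
  have hw' : deriv (fun z => (q z - 1) / (q z + 1)) 0 = deriv q 0 / 2 := by
    rw [(hasDerivAt_sub_one_div_add_one (hd.differentiableAt hball) hne₀).deriv, h₀]
    ring
  have hw'' := iteratedDeriv_two_sub_one_div_add_one (hd.analyticAt hball) hne₀
  have := norm_iteratedDeriv_two_div_two_le_of_mapsTo_ball hwd hw_maps (by simp [h₀])
    (by rw [hw', norm_div]; norm_num; linarith)
  rw [hw'', hw', h₀] at this
  convert this using 2
  ring

lemma re_one_sub_div_add_div_mul_pos {E p : ℂ} {c : ℝ} (hc : 0 < c)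
    (h : E.re - c < (E * p).re) : 0 < (1 - E / c + E / c * p).re := by
  simp only [add_re, sub_re, one_re, div_mul_eq_mul_div, div_ofReal_re]
  rw [show 1 - E.re / c + (E * p).re / c = (c - E.re + (E * p).re) / c by field_simp]
  exact div_pos (by linarith) hc

lemma exists_norm_le_one_eq_mul_add_sq {b l : ℂ} (hl : ‖l‖ < 1)
    (h : ‖b - l ^ 2‖ ≤ 1 - ‖l‖ ^ 2) :
    ∃ a : ℂ, ‖a‖ ≤ 1 ∧ b = ((1 - ‖l‖ ^ 2 : ℝ) : ℂ) * a + l ^ 2 := by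
  have hpos : 0 < 1 - ‖l‖ ^ 2 := by nlinarith [norm_nonneg l]
  have hposC : ((1 - ‖l‖ ^ 2 : ℝ) : ℂ) ≠ 0 := by exact_mod_cast hpos.ne'
  refine ⟨(b - l ^ 2) / ((1 - ‖l‖ ^ 2 : ℝ) : ℂ), ?_, ?_⟩
  · rwa [norm_div, norm_real, Real.norm_of_nonneg hpos.le, div_le_one hpos]
  · rw [mul_div_cancel₀ _ hposC, sub_add_cancel]

theorem stmt_14_general (γ β : ℝ) (hγ : |γ| < Real.pi / 2) (hβ1 : β < 1)
    (lam : ℂ) (hlam : ‖lam‖ < 1)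
    (P : ℂ → ℂ) (hP : DifferentiableOn ℂ P (ball (0:ℂ) 1)) (hP0 : P 0 = 1)
    (hre : ∀ z ∈ ball (0:ℂ) 1, β * Real.cos γ < (Complex.exp (γ * Complex.I) * P z).re)
    (hP'0 : deriv P 0 = 2 * (1 - β) * Complex.exp (-(γ * Complex.I)) * lam * Real.cos γ) :
    ∃ a : ℂ, ‖a‖ ≤ 1 ∧
      iteratedDeriv 2 P 0 =
        4 * (1 - β) * (((1 - ‖lam‖^2 : ℝ) : ℂ) * a + lam^2) *
          Complex.exp (-(γ * Complex.I)) * Real.cos γ := by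
  have hc : 0 < (1 - β) * Real.cos γ :=
    mul_pos (sub_pos.2 hβ1) (Real.cos_pos_of_mem_Ioo (abs_lt.1 hγ))
  set c := (1 - β) * Real.cos γ with hc_def
  have hcC : (c : ℂ) = (1 - β) * Real.cos γ := by push_cast [hc_def]; rfl
  set E := exp (γ * I)
  have hE : exp (-(γ * I)) = E⁻¹ := exp_neg _
  have hE0 : E ≠ 0 := exp_ne_zero _
  have hc0 : (c : ℂ) ≠ 0 := by exact_mod_cast hc.ne'
  set q : ℂ → ℂ := fun z => (1 - E / c) + E / c * P z
  have hq_re : ∀ z ∈ ball (0 : ℂ) 1, 0 < (q z).re := fun z hz =>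
    re_one_sub_div_add_div_mul_pos hc
      (by rw [exp_ofReal_mul_I_re, hc_def]; linarith [hre z hz])
  have hq' : deriv q 0 = 2 * lam := by
    simp only [q, deriv_const_add', deriv_const_mul_field', hP'0, hE]
    field_simp
    rw [hcC]
    ring
  have hq'' : iteratedDeriv 2 q 0 = E / c * iteratedDeriv 2 P 0 := by
    simp only [q, iteratedDeriv_const_add two_pos, iteratedDeriv_const_mul_field]
  have hbound := norm_iteratedDeriv_two_div_four_sub_sq_le (q := q)
    ((hP.const_mul _).const_add _) (by simp [q, hP0]) hq_re
    (by rw [hq', norm_mul]; norm_num; linarith)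
  rw [hq', hq'', mul_div_cancel_left₀ _ two_ne_zero] at hbound
  obtain ⟨a, ha, hP''⟩ := exists_norm_le_one_eq_mul_add_sq hlam hbound
  refine ⟨a, ha, ?_⟩
  rw [← hP'', hE]
  field_simp
  rw [hcC]
  ring

theorem stmt_14 (γ β : ℝ) (hγ : |γ| < Real.pi / 2) (hβ0 : 0 ≤ β) (hβ1 : β < 1)
    (lam : ℂ) (hlam : ‖lam‖ < 1)
    (P : ℂ → ℂ) (hP : DifferentiableOn ℂ P (ball (0:ℂ) 1)) (hP0 : P 0 = 1)
    (hre : ∀ z ∈ ball (0:ℂ) 1, β * Real.cos γ < (Complex.exp (γ * Complex.I) * P z).re)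
    (hP'0 : deriv P 0 = 2 * (1 - β) * Complex.exp (-(γ * Complex.I)) * lam * Real.cos γ) :
    ∃ a : ℂ, ‖a‖ ≤ 1 ∧
      iteratedDeriv 2 P 0 =
        4 * (1 - β) * (((1 - ‖lam‖^2 : ℝ) : ℂ) * a + lam^2) *
          Complex.exp (-(γ * Complex.I)) * Real.cos γ :=
  stmt_14_general γ β hγ hβ1 lam hlam P hP hP0 hre hP'0
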